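/- arXiv:1312.4037 — 6 statements merged into one kernel-verified Lean document; each statement's English description precedes it below -/
import Mathlib

section
/- Let x, y, n, q be integers with |x| > 1, |y| > 1, n > 2, q ≥ 2, n odd, satisfying (x^n − 1)/(x − 1) = y^q. If D is a positive divisor of n satisfying gcd(D, n/D) = 1 and gcd(D, Q_{n/D}) = 1, then there exist integers y1 and y2 with y1·y2 = y, y1^q = ((x^D)^(n/D) − 1)/(x^D − 1) and y2^q = (x^D − 1)/(x − 1). -/
/-! The identity `(x^n - 1)/(x - 1) = (x^{DN} - 1)/(x^D - 1) · (x^D - 1)/(x - 1)`, with `N = n/D`,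
splits `y^q` into two geometric sums. A common prime `p` of them has `x^D ≡ 1 (mod p)`, hence divides
the first sum `≡ N`; so `p - 1 ∣ Q_N`, and the order of `x` mod `p` divides `gcd(D, Q_N) = 1`. Then
`x ≡ 1`, so `p` also divides the second sum `≡ D`, contradicting `gcd(D, N) = 1`. Coprime positive
factors of a `q`-th power are `q`-th powers, and the second one is positive because `D` is odd. -/

open Finset
open scoped Nat

theorem pow_eq_one_of_geom_sum_eq_zero {R : Type*} [CommRing R] {x : R} {D : ℕ}
    (h : ∑ i ∈ range D, x ^ i = 0) : x ^ D = 1 := by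
  have := geom_sum_mul x D
  rw [h, zero_mul] at this
  exact sub_eq_zero.mp this.symm

theorem Nat.sub_one_dvd_totient_prod_primeFactors {p N : ℕ} (hp : p.Prime) (hpN : p ∣ N)
    (hN : N ≠ 0) : p - 1 ∣ φ (N.primeFactors.prod id) := by
  rw [← Nat.totient_prime hp]
  exact Nat.totient_dvd_of_dvd
    (Finset.dvd_prod_of_mem id (Nat.mem_primeFactors.mpr ⟨hp, hpN, hN⟩))

theorem isCoprime_geom_sum_pow_geom_sum (x : ℤ) {D N : ℕ} (hDN : D.Coprime N)
    (hDQ : D.Coprime (φ (N.primeFactors.prod id))) :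
    IsCoprime (∑ i ∈ range N, (x ^ D) ^ i) (∑ i ∈ range D, x ^ i) := by
  rw [Int.isCoprime_iff_gcd_eq_one]
  by_contra hg
  obtain ⟨p, hp, hpg⟩ := Nat.exists_prime_and_dvd hg
  have : Fact p.Prime := ⟨hp⟩
  have hA := (ZMod.intCast_zmod_eq_zero_iff_dvd _ p).mpr
    ((Int.natCast_dvd_natCast.mpr hpg).trans (Int.gcd_dvd_left _ _))
  have hB := (ZMod.intCast_zmod_eq_zero_iff_dvd _ p).mpr
    ((Int.natCast_dvd_natCast.mpr hpg).trans (Int.gcd_dvd_right _ _))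
  push_cast at hA hB
  have hxD := pow_eq_one_of_geom_sum_eq_zero hB
  have hpN : p ∣ N := by simpa [hxD, ZMod.natCast_eq_zero_iff] using hA
  have hpD : ¬ p ∣ D := fun hpD => hp.not_dvd_one (hDN.gcd_eq_one ▸ Nat.dvd_gcd hpD hpN)
  have hx0 : (x : ZMod p) ≠ 0 := by
    intro h0
    rw [h0, zero_pow_eq_one₀] at hxD
    exact hpD (hxD ▸ dvd_zero p)
  have hN : N ≠ 0 := by
    rintro rfl
    rw [Nat.coprime_zero_right] at hDN
    simp [hDN] at hB
  obtain ⟨k, hk⟩ := Nat.sub_one_dvd_totient_prod_primeFactors hp hpN hN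
  have hxQ : (x : ZMod p) ^ φ (N.primeFactors.prod id) = 1 := by
    rw [hk, pow_mul, ZMod.pow_card_sub_one_eq_one hx0, one_pow]
  have hx1 : (x : ZMod p) = 1 := by
    rw [← pow_one (x : ZMod p), ← hDQ.gcd_eq_one]
    exact pow_gcd_eq_one.mpr ⟨hxD, hxQ⟩
  exact hpD (by simpa [hx1, ZMod.natCast_eq_zero_iff] using hB)

theorem Int.exists_mul_eq_and_pow_eq_of_mul_eq_pow {A B y : ℤ} {q : ℕ} (hq : q ≠ 0)
    (hAB : IsCoprime A B) (hB : 0 < B) (h : A * B = y ^ q) :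
    ∃ y₁ y₂ : ℤ, y₁ * y₂ = y ∧ y₁ ^ q = A ∧ y₂ ^ q = B := by
  obtain ⟨d, hd⟩ := exists_associated_pow_of_mul_eq_pow' hAB.symm (by rw [mul_comm, h])
  have hdB : |d| ^ q = B := by
    rw [← abs_pow, Int.abs_eq_natAbs, Int.associated_iff_natAbs.mp hd, ← Int.abs_eq_natAbs,
      abs_of_pos hB]
  obtain ⟨y₁, rfl⟩ : |d| ∣ y := (Int.pow_dvd_pow_iff hq).mp ⟨A, by rw [hdB, ← h, mul_comm]⟩
  refine ⟨y₁, |d|, mul_comm _ _, ?_, hdB⟩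
  rw [mul_pow, hdB] at h
  exact (mul_right_cancel₀ hB.ne' (h.trans (mul_comm _ _))).symm

theorem sub_one_mul_geom_sum_pow_mul_geom_sum {R : Type*} [CommRing R] (x : R) (D N : ℕ) :
    (x - 1) * ((∑ i ∈ range N, (x ^ D) ^ i) * ∑ i ∈ range D, x ^ i) = x ^ (D * N) - 1 := by
  rw [pow_mul, ← geom_sum_mul (x ^ D), ← geom_sum_mul x]
  ring

theorem shorey_factorization_lemma_general
    (x y : ℤ) (n q D : ℕ)
    (hx : 1 < |x|) (hq : 2 ≤ q) (hodd : Odd n)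
    (heq : x ^ n - 1 = (x - 1) * y ^ q)
    (hDn : D ∣ n)
    (hcop1 : Nat.gcd D (n / D) = 1)
    (hcop2 : Nat.gcd D (Nat.totient ((n / D).primeFactors.prod id)) = 1) :
    ∃ y₁ y₂ : ℤ, y₁ * y₂ = y ∧
      (x ^ D) ^ (n / D) - 1 = (x ^ D - 1) * y₁ ^ q ∧
      x ^ D - 1 = (x - 1) * y₂ ^ q := by
  have hn : D * (n / D) = n := Nat.mul_div_cancel' hDn
  have hDodd : Odd D := (Nat.odd_mul.mp (hn ▸ hodd)).1
  have hx1 : x - 1 ≠ 0 := fun h => by simp [sub_eq_zero.mp h] at hx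
  have hAB : (∑ i ∈ range (n / D), (x ^ D) ^ i) * (∑ i ∈ range D, x ^ i) = y ^ q := by
    apply mul_left_cancel₀ hx1
    rw [sub_one_mul_geom_sum_pow_mul_geom_sum, hn, heq]
  obtain ⟨y₁, y₂, hy, hy₁, hy₂⟩ := Int.exists_mul_eq_and_pow_eq_of_mul_eq_pow (by omega)
    (isCoprime_geom_sum_pow_geom_sum x hcop1 hcop2) hDodd.geom_sum_pos hAB
  refine ⟨y₁, y₂, hy, ?_, ?_⟩
  · rw [← geom_sum_mul, hy₁, mul_comm]
  · rw [← geom_sum_mul, hy₂, mul_comm]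

/-- **Lemma (Shorey).** Let `x, y, n, q` be integers with `|x| > 1`, `|y| > 1`,
`n > 2`, `q ≥ 2`, `n` odd, satisfying `(x^n − 1)/(x − 1) = y^q`.  If `D` is a positive
divisor of `n` satisfying `gcd(D, n/D) = 1` and `gcd(D, Q_{n/D}) = 1` (where
`Q_m = φ(G(m))` with `G(m)` the radical of `m`, i.e. the product of the distinct
primes dividing `m`), then there are integers `y₁`, `y₂` with `y₁y₂ = y`,
`y₁^q = ((x^D)^(n/D) − 1)/(x^D − 1)` and `y₂^q = (x^D − 1)/(x − 1)`. -/
theorem shorey_factorization_lemma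
    (x y : ℤ) (n q D : ℕ)
    (hx : 1 < |x|) (hy : 1 < |y|) (hn : 2 < n) (hq : 2 ≤ q) (hodd : Odd n)
    (heq : x ^ n - 1 = (x - 1) * y ^ q)
    (hD : 0 < D) (hDn : D ∣ n)
    (hcop1 : Nat.gcd D (n / D) = 1)
    (hcop2 : Nat.gcd D (Nat.totient ((n / D).primeFactors.prod id)) = 1) :
    ∃ y₁ y₂ : ℤ, y₁ * y₂ = y ∧
      (x ^ D) ^ (n / D) - 1 = (x ^ D - 1) * y₁ ^ q ∧
      x ^ D - 1 = (x - 1) * y₂ ^ q :=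
  shorey_factorization_lemma_general x y n q D hx hq hodd heq hDn hcop1 hcop2
end

section
/- Let x, y, n, q be integers with |x| > 1, |y| > 1, n > 2, q ≥ 2, n odd, satisfying (x^n − 1)/(x − 1) = y^q, and write n = p_1^{α_1} ⋯ p_k^{α_k} with primes p_1 < p_2 < ⋯ < p_k and positive integers α_i. Then for each 1 ≤ s ≤ k there exists δ_s ∈ {0, 1} such that: for every 0 ≤ t ≤ α_s − 1, setting M_{s,t} = p_s^t · p_{s+1}^{α_{s+1}} ⋯ p_k^{α_k}, there exists an integer y_{s,t} with (x^{p_s · M_{s,t}} − 1)/(x^{M_{s,t}} − 1) = p_s^{δ_s} · y_{s,t}^q; moreover, if δ_s = 1 then q divides α_s. -/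
/-!
Fix `s`, write `P = p_s`, `N = ∏_{j > s} p_j^{α_j}`, `M = P^t N`, and let
`d = (x^{PM} - 1)/(x^M - 1) = ∑_{i < P} x^{Mi}`, which is positive since `P` is odd.

If a prime `r ≠ P` divides `d`, then `r ∤ x^M - 1` (otherwise `d ≡ P mod r`), so the order `e`
of `x` modulo `r` divides `PM` but not `M`; hence `P ∣ e ∣ r - 1` and `r > P`. As `e ∣ PM ∣ n`
and `n / (PM)` has no prime factor above `P`, lifting the exponent gives
`v_r(d) = v_r(x^{PM} - 1) = v_r(x^n - 1) = v_r(y^q)`, a multiple of `q`.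
For `r = P`, lifting the exponent and Fermat's little theorem give `v_P(d) = δ`, where `δ = 1`
if `P ∣ x^M - 1`, equivalently `P ∣ x^N - 1`, and `δ = 0` otherwise. Hence `d = P^δ c^q`.

If `δ = 1`, the order of `x` modulo `P` divides both `N` and `P - 1`, which are coprime, so
`P ∣ x - 1`, and lifting the exponent in the equation gives `α_s = v_P(n) = v_P(y^q)`.
-/

open Finset

lemma pow_ne_one_of_one_lt_abs {x : ℤ} (hx : 1 < |x|) {m : ℕ} (hm : m ≠ 0) : x ^ m ≠ 1 := by
  rw [Ne, pow_eq_one_iff_of_ne_zero hm]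
  rintro (rfl | ⟨rfl, -⟩) <;> simp at hx

lemma natCast_dvd_pow_sub_one_iff_orderOf_dvd (r : ℕ) (x : ℤ) (m : ℕ) :
    (r : ℤ) ∣ x ^ m - 1 ↔ orderOf (x : ZMod r) ∣ m := by
  rw [← ZMod.intCast_zmod_eq_zero_iff_dvd, orderOf_dvd_iff_pow_eq_one]
  push_cast
  rw [sub_eq_zero]

lemma intCast_zmod_ne_zero_of_dvd_pow_sub_one {r : ℕ} [Fact r.Prime] {x : ℤ} {m : ℕ}
    (hm : m ≠ 0) (h : (r : ℤ) ∣ x ^ m - 1) : (x : ZMod r) ≠ 0 := fun h0 => by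
  rw [← ZMod.intCast_zmod_eq_zero_iff_dvd] at h
  push_cast at h
  simp [h0, zero_pow hm] at h

lemma lt_of_dvd_orderOf {r P : ℕ} [hr : Fact r.Prime] {x : ℤ} (hx : (x : ZMod r) ≠ 0)
    (h : P ∣ orderOf (x : ZMod r)) : P < r := by
  have := hr.out.two_le
  have : P ≤ r - 1 := Nat.le_of_dvd (by omega) (h.trans (ZMod.orderOf_dvd_card_sub_one hx))
  omega

lemma dvd_orderOf_of_dvd_pow_mul_sub_one {r P M : ℕ} (hP : P.Prime) {x : ℤ}
    (h : (r : ℤ) ∣ x ^ (P * M) - 1) (hM : ¬ (r : ℤ) ∣ x ^ M - 1) :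
    P ∣ orderOf (x : ZMod r) := by
  rw [natCast_dvd_pow_sub_one_iff_orderOf_dvd] at h hM
  by_contra hPe
  exact hM ((hP.coprime_iff_not_dvd.mpr hPe).symm.dvd_of_dvd_mul_left h)

lemma natCast_dvd_pow_prime_pow_mul_sub_one_iff {p : ℕ} [Fact p.Prime] (x : ℤ) (t N : ℕ) :
    (p : ℤ) ∣ x ^ (p ^ t * N) - 1 ↔ (p : ℤ) ∣ x ^ N - 1 := by
  simp_rw [← ZMod.intCast_zmod_eq_zero_iff_dvd]
  push_cast
  rw [pow_mul, ZMod.pow_card_pow]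

lemma natCast_dvd_sub_one_of_dvd_pow_sub_one {p : ℕ} [Fact p.Prime] {x : ℤ} {N : ℕ}
    (hN0 : N ≠ 0) (hN : N.Coprime (p - 1)) (h : (p : ℤ) ∣ x ^ N - 1) : (p : ℤ) ∣ x - 1 := by
  have he1 := Nat.eq_one_of_dvd_coprimes hN
    ((natCast_dvd_pow_sub_one_iff_orderOf_dvd p x N).mp h)
    (ZMod.orderOf_dvd_card_sub_one (intCast_zmod_ne_zero_of_dvd_pow_sub_one hN0 h))
  simpa using (natCast_dvd_pow_sub_one_iff_orderOf_dvd p x 1).mpr he1.dvd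

lemma not_dvd_sub_one_of_dvd_geom_sum {R : Type*} [CommRing R] {a z : R} {P : ℕ}
    (hP : ¬ a ∣ P) (h : a ∣ ∑ i ∈ range P, z ^ i) : ¬ a ∣ z - 1 := fun hz =>
  hP (by simpa using (dvd_geom_sum₂_iff_of_dvd_sub (y := 1) hz).mp (by simpa using h))

lemma dvd_padicValInt_pow (p : ℕ) [Fact p.Prime] (y : ℤ) (q : ℕ) :
    q ∣ padicValInt p (y ^ q) := by
  rw [padicValInt, Int.natAbs_pow, padicValNat.pow]
  exact dvd_mul_right _ _

lemma padicValInt_eq_emultiplicity {p : ℕ} [Fact p.Prime] {z : ℤ} (hz : z ≠ 0) :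
    (padicValInt p z : ℕ∞) = emultiplicity (p : ℤ) z := by
  rw [padicValInt, padicValNat_eq_emultiplicity (Int.natAbs_ne_zero.mpr hz),
    Int.emultiplicity_natAbs]

lemma padicValInt_pow_sub_one_of_dvd_sub_one {p : ℕ} [hp : Fact p.Prime] (hodd : Odd p) {a : ℤ}
    (ha : (p : ℤ) ∣ a - 1) {m : ℕ} (ham : a ^ m ≠ 1) :
    padicValInt p (a ^ m - 1) = padicValInt p (a - 1) + padicValNat p m := by
  have hm : m ≠ 0 := by rintro rfl; exact ham (pow_zero a)
  have ha1 : a ≠ 1 := by rintro rfl; exact ham (one_pow m)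
  have hpa : ¬ (p : ℤ) ∣ a := fun h =>
    hp.out.not_dvd_one (Int.natCast_dvd_natCast.mp (by simpa using dvd_sub h ha))
  rw [← Nat.cast_inj (R := ℕ∞), Nat.cast_add, padicValInt_eq_emultiplicity (sub_ne_zero.mpr ham),
    padicValInt_eq_emultiplicity (sub_ne_zero.mpr ha1), padicValNat_eq_emultiplicity hm]
  simpa using Int.emultiplicity_pow_sub_pow hp.out hodd (y := 1) (by simpa using ha) hpa m

lemma padicValInt_pow_sub_one_of_orderOf_dvd {p : ℕ} [hp : Fact p.Prime] (hodd : Odd p) {x : ℤ}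
    {m : ℕ} (hm : orderOf (x : ZMod p) ∣ m) (hxm : x ^ m ≠ 1) :
    padicValInt p (x ^ m - 1) =
      padicValInt p (x ^ orderOf (x : ZMod p) - 1) + padicValNat p m := by
  have hm0 : m ≠ 0 := by rintro rfl; exact hxm (pow_zero x)
  have hx0 := intCast_zmod_ne_zero_of_dvd_pow_sub_one hm0
    ((natCast_dvd_pow_sub_one_iff_orderOf_dvd p x m).mpr hm)
  set e := orderOf (x : ZMod p)
  have hpe : ¬ p ∣ e := fun h => (lt_of_dvd_orderOf hx0 h).false
  obtain ⟨c, rfl⟩ := hm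
  have he0 : e ≠ 0 := left_ne_zero_of_mul hm0
  rw [pow_mul, padicValInt_pow_sub_one_of_dvd_sub_one hodd
    ((natCast_dvd_pow_sub_one_iff_orderOf_dvd p x e).mpr dvd_rfl) (by rwa [← pow_mul]),
    padicValNat.mul he0 (right_ne_zero_of_mul hm0), padicValNat.eq_zero_of_not_dvd hpe, zero_add]

lemma padicValInt_geom_sum_prime {p : ℕ} [hp : Fact p.Prime] (hodd : Odd p) (z : ℤ) :
    padicValInt p (∑ i ∈ range p, z ^ i) = if (p : ℤ) ∣ z - 1 then 1 else 0 := by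
  split_ifs with h
  · have hpz : ¬ (p : ℤ) ∣ z := fun hz =>
      hp.out.not_dvd_one (Int.natCast_dvd_natCast.mp (by simpa using dvd_sub hz h))
    have := emultiplicity_geom_sum₂_eq_one (Nat.prime_iff_prime_int.mp hp.out) hodd
      (y := 1) (by simpa using h) hpz
    simp only [one_pow, mul_one] at this
    exact_mod_cast (padicValInt_eq_emultiplicity hodd.geom_sum_pos.ne').trans this
  · refine padicValInt.eq_zero_of_not_dvd fun hS => h ?_
    have hzp : (p : ℤ) ∣ z ^ p - 1 := geom_sum_mul z p ▸ dvd_mul_of_dvd_left hS (z - 1)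
    rw [← ZMod.intCast_zmod_eq_zero_iff_dvd] at hzp ⊢
    push_cast at hzp ⊢
    rwa [ZMod.pow_card] at hzp

lemma Nat.exists_eq_pow_of_dvd_factorization {m q : ℕ} (hm : m ≠ 0)
    (h : ∀ r, q ∣ m.factorization r) : ∃ c, m = c ^ q := by
  refine ⟨m.factorization.prod fun r k => r ^ (k / q), ?_⟩
  conv_lhs => rw [← Nat.prod_factorization_pow_eq_self hm]
  rw [Finsupp.prod, Finsupp.prod, ← Finset.prod_pow]
  exact Finset.prod_congr rfl fun r _ => by rw [← pow_mul, Nat.div_mul_cancel (h r)]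

lemma Int.exists_eq_pow_padicValInt_mul_pow {P : ℕ} [Fact P.Prime] {d : ℤ} (hd : 0 < d) {q : ℕ}
    (h : ∀ r, r.Prime → r ≠ P → q ∣ padicValInt r d) :
    ∃ c : ℤ, d = P ^ padicValInt P d * c ^ q := by
  lift d to ℕ using hd.le
  have hd0 : d ≠ 0 := by exact_mod_cast hd.ne'
  obtain ⟨c, hc⟩ : ∃ c, ordCompl[P] d = c ^ q := by
    refine Nat.exists_eq_pow_of_dvd_factorization (Nat.div_pos (Nat.ordProj_le P hd0)
      (Nat.ordProj_pos d P)).ne' fun r => ?_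
    rw [Nat.factorization_ordCompl]
    by_cases hrP : r = P
    · simp [hrP]
    rw [Finsupp.erase_ne hrP]
    by_cases hr : r.Prime
    · simpa [Nat.factorization_def d hr] using h r hr hrP
    · simp [Nat.factorization_eq_zero_of_not_prime d hr]
  refine ⟨c, ?_⟩
  rw [padicValInt.of_nat, ← Nat.factorization_def d Fact.out]
  exact_mod_cast (Nat.ordProj_mul_ordCompl_eq_self d P).symm.trans (by rw [hc])

section Equation

variable {x y : ℤ} {n q : ℕ}

lemma dvd_padicValInt_geom_sum_of_ne (hx : 1 < |x|) (hn0 : n ≠ 0)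
    (heq : x ^ n - 1 = (x - 1) * y ^ q) {P M L : ℕ} (hP : P.Prime) (hn : n = L * (P * M))
    (hL : ∀ ℓ, ℓ.Prime → ℓ ∣ L → ℓ ≤ P) {r : ℕ} [hr : Fact r.Prime] (hrP : r ≠ P) :
    q ∣ padicValInt r (∑ i ∈ range P, (x ^ M) ^ i) := by
  set d := ∑ i ∈ range P, (x ^ M) ^ i
  by_cases hrd : (r : ℤ) ∣ d
  swap
  · rw [padicValInt.eq_zero_of_not_dvd hrd]; exact dvd_zero q
  obtain ⟨hL0, hPM0⟩ := mul_ne_zero_iff.mp (hn ▸ hn0)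
  have hd : d * (x ^ M - 1) = x ^ (P * M) - 1 := by rw [geom_sum_mul, ← pow_mul, mul_comm]
  have hrM : ¬ (r : ℤ) ∣ x ^ M - 1 := not_dvd_sub_one_of_dvd_geom_sum (fun h =>
    hrP ((Nat.prime_dvd_prime_iff_eq hr.out hP).mp (Int.natCast_dvd_natCast.mp h))) hrd
  have hrPM : (r : ℤ) ∣ x ^ (P * M) - 1 := hd ▸ dvd_mul_of_dvd_left hrd _
  set e := orderOf (x : ZMod r)
  have hPe : P ∣ e := dvd_orderOf_of_dvd_pow_mul_sub_one hP hrPM hrM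
  have hePM : e ∣ P * M := (natCast_dvd_pow_sub_one_iff_orderOf_dvd r x _).mp hrPM
  have hPr : P < r := lt_of_dvd_orderOf (intCast_zmod_ne_zero_of_dvd_pow_sub_one hPM0 hrPM) hPe
  have hrodd : Odd r := hr.out.odd_of_ne_two (by have := hP.two_le; omega)
  have hrx : ¬ (r : ℤ) ∣ x - 1 := fun h => hP.ne_one <| Nat.dvd_one.mp <|
    hPe.trans ((natCast_dvd_pow_sub_one_iff_orderOf_dvd r x 1).mp (by simpa using h))
  have hrL : ¬ r ∣ L := fun h => absurd (hL r hr.out h) (by omega)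
  have hxPM := pow_ne_one_of_one_lt_abs hx hPM0
  have hxn := pow_ne_one_of_one_lt_abs hx hn0
  obtain ⟨hd0, hxM⟩ := mul_ne_zero_iff.mp (hd ▸ sub_ne_zero.mpr hxPM)
  obtain ⟨hx1, hyq⟩ := mul_ne_zero_iff.mp (heq ▸ sub_ne_zero.mpr hxn)
  suffices padicValInt r d = padicValInt r (y ^ q) from this ▸ dvd_padicValInt_pow r y q
  calc padicValInt r d = padicValInt r (x ^ (P * M) - 1) := by
        rw [← hd, padicValInt.mul hd0 hxM, padicValInt.eq_zero_of_not_dvd hrM, add_zero]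
    _ = padicValInt r (x ^ e - 1) + padicValNat r (P * M) :=
        padicValInt_pow_sub_one_of_orderOf_dvd hrodd hePM hxPM
    _ = padicValInt r (x ^ e - 1) + padicValNat r n := by
        rw [hn, padicValNat.mul hL0 hPM0, padicValNat.eq_zero_of_not_dvd hrL, zero_add]
    _ = padicValInt r (x ^ n - 1) :=
        (padicValInt_pow_sub_one_of_orderOf_dvd hrodd
          (hePM.trans (hn ▸ dvd_mul_left _ _)) hxn).symm
    _ = padicValInt r (y ^ q) := by
        rw [heq, padicValInt.mul hx1 hyq, padicValInt.eq_zero_of_not_dvd hrx, zero_add]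

lemma dvd_padicValNat_of_dvd_sub_one (hx : 1 < |x|) (hn0 : n ≠ 0)
    (heq : x ^ n - 1 = (x - 1) * y ^ q) {P : ℕ} [Fact P.Prime] (hP : Odd P)
    (h : (P : ℤ) ∣ x - 1) : q ∣ padicValNat P n := by
  have hxn := pow_ne_one_of_one_lt_abs hx hn0
  have hLTE := padicValInt_pow_sub_one_of_dvd_sub_one hP h hxn
  obtain ⟨hx1, hyq⟩ := mul_ne_zero_iff.mp (heq ▸ sub_ne_zero.mpr hxn)
  rw [heq, padicValInt.mul hx1 hyq] at hLTE
  exact Nat.add_left_cancel hLTE ▸ dvd_padicValInt_pow P y q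

lemma exists_geom_sum_pow_eq_prime_pow_mul_pow (hx : 1 < |x|) (hn0 : n ≠ 0)
    (heq : x ^ n - 1 = (x - 1) * y ^ q) {P A a N t : ℕ} [hP : Fact P.Prime] (hPodd : Odd P)
    (hn : n = A * P ^ a * N) (hA : ∀ ℓ, ℓ.Prime → ℓ ∣ A → ℓ < P) (ht : t < a) :
    ∃ c : ℤ, ∑ i ∈ range P, (x ^ (P ^ t * N)) ^ i =
      P ^ (if (P : ℤ) ∣ x ^ N - 1 then 1 else 0) * c ^ q := by
  obtain ⟨u, rfl⟩ : ∃ u, a = u + (t + 1) := ⟨a - (t + 1), by omega⟩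
  have hL : ∀ ℓ, ℓ.Prime → ℓ ∣ A * P ^ u → ℓ ≤ P := fun ℓ hℓ h =>
    (hℓ.dvd_mul.mp h).elim (fun h => (hA ℓ hℓ h).le)
      (fun h => Nat.le_of_dvd hP.out.pos (hℓ.dvd_of_dvd_pow h))
  obtain ⟨c, hc⟩ := Int.exists_eq_pow_padicValInt_mul_pow (P := P)
    (hPodd.geom_sum_pos (x := x ^ (P ^ t * N))) fun r hr hrP =>
      have := Fact.mk hr
      dvd_padicValInt_geom_sum_of_ne hx hn0 heq hP.out (by rw [hn]; ring) hL hrP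
  simp only [padicValInt_geom_sum_prime hPodd, natCast_dvd_pow_prime_pow_mul_sub_one_iff] at hc
  exact ⟨c, hc⟩

lemma dvd_of_natCast_dvd_pow_sub_one (hx : 1 < |x|) (hn0 : n ≠ 0)
    (heq : x ^ n - 1 = (x - 1) * y ^ q) {P A a N : ℕ} [hP : Fact P.Prime] (hPodd : Odd P)
    (hn : n = A * P ^ a * N) (hA : ∀ ℓ, ℓ.Prime → ℓ ∣ A → ℓ < P)
    (hN : ∀ ℓ, ℓ.Prime → ℓ ∣ N → P < ℓ) (h : (P : ℤ) ∣ x ^ N - 1) : q ∣ a := by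
  obtain ⟨⟨hA0, hPa0⟩, hN0⟩ : (A ≠ 0 ∧ P ^ a ≠ 0) ∧ N ≠ 0 := by
    rw [← mul_ne_zero_iff, ← mul_ne_zero_iff, ← hn]; exact hn0
  have hcop : N.Coprime (P - 1) := Nat.coprime_of_dvd fun ℓ hℓ hℓN hℓP =>
    absurd (Nat.le_of_dvd (by have := hP.out.two_le; omega) hℓP) (by have := hN ℓ hℓ hℓN; omega)
  have hPA : ¬ P ∣ A := fun h => (hA P hP.out h).false
  have hPN : ¬ P ∣ N := fun h => (hN P hP.out h).false
  have := dvd_padicValNat_of_dvd_sub_one hx hn0 heq hPodd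
    (natCast_dvd_sub_one_of_dvd_pow_sub_one hN0 hcop h)
  rwa [hn, padicValNat.mul (mul_ne_zero hA0 hPa0) hN0, padicValNat.mul hA0 hPa0,
    padicValNat.eq_zero_of_not_dvd hPA, padicValNat.eq_zero_of_not_dvd hPN,
    padicValNat.prime_pow, zero_add, add_zero] at this

end Equation

lemma Finset.prod_univ_eq_prod_lt_mul_mul_prod_gt {ι M : Type*} [Fintype ι] [LinearOrder ι]
    [CommMonoid M] (f : ι → M) (s : ι) :
    ∏ i, f i = (∏ i ∈ univ.filter (· < s), f i) * f s * ∏ i ∈ univ.filter (s < ·), f i := by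
  rw [← prod_filter_mul_prod_filter_not univ (s < ·), mul_comm]
  congr 1
  have : univ.filter (fun i => ¬ s < i) = insert s (univ.filter (· < s)) := by
    ext i; simp [le_iff_lt_or_eq, or_comm]
  rw [this, prod_insert (by simp), mul_comm]

lemma exists_eq_of_prime_dvd_prod_pow {ι : Type*} {S : Finset ι} {p α : ι → ℕ}
    (hp : ∀ i, (p i).Prime) {ℓ : ℕ} (hℓ : ℓ.Prime) (h : ℓ ∣ ∏ i ∈ S, p i ^ α i) :
    ∃ i ∈ S, ℓ = p i := by
  obtain ⟨i, hi, hdvd⟩ := hℓ.prime.exists_mem_finset_dvd h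
  exact ⟨i, hi, (Nat.prime_dvd_prime_iff_eq hℓ (hp i)).mp (hℓ.dvd_of_dvd_pow hdvd)⟩

theorem nagell_ljunggren_tower_lemma_general
    (x y : ℤ) (n q k : ℕ) (p α : Fin k → ℕ)
    (hx : 1 < |x|) (hodd : Odd n)
    (heq : x ^ n - 1 = (x - 1) * y ^ q)
    (hp : ∀ i, (p i).Prime) (hmono : StrictMono p) (hα : ∀ i, 0 < α i)
    (hfac : n = ∏ i, p i ^ α i) :
    ∀ s : Fin k, ∃ δ : ℕ, (δ = 0 ∨ δ = 1) ∧
      (∀ t, t ≤ α s - 1 → ∃ y' : ℤ,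
        x ^ (p s * (p s ^ t * ∏ j ∈ Finset.univ.filter (fun j => s < j), p j ^ α j)) - 1
          = (x ^ (p s ^ t * ∏ j ∈ Finset.univ.filter (fun j => s < j), p j ^ α j) - 1) *
              ((p s : ℤ) ^ δ * y' ^ q)) ∧
      (δ = 1 → q ∣ α s) := by
  intro s
  set P := p s
  set N := ∏ j ∈ univ.filter (s < ·), p j ^ α j
  set A := ∏ j ∈ univ.filter (· < s), p j ^ α j
  have : Fact P.Prime := ⟨hp s⟩
  have hn0 : n ≠ 0 := hodd.pos.ne'
  have hn : n = A * P ^ α s * N := hfac.trans (prod_univ_eq_prod_lt_mul_mul_prod_gt _ s)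
  have hA : ∀ ℓ, ℓ.Prime → ℓ ∣ A → ℓ < P := fun ℓ hℓ h => by
    obtain ⟨j, hj, rfl⟩ := exists_eq_of_prime_dvd_prod_pow hp hℓ h
    exact hmono (mem_filter.mp hj).2
  have hN : ∀ ℓ, ℓ.Prime → ℓ ∣ N → P < ℓ := fun ℓ hℓ h => by
    obtain ⟨j, hj, rfl⟩ := exists_eq_of_prime_dvd_prod_pow hp hℓ h
    exact hmono (mem_filter.mp hj).2
  have hPodd : Odd P :=
    hodd.of_dvd_nat (hn ▸ ((dvd_pow_self P (hα s).ne').mul_left A).mul_right N)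
  refine ⟨if (P : ℤ) ∣ x ^ N - 1 then 1 else 0, by split_ifs <;> simp, fun t ht => ?_,
    fun hδ => dvd_of_natCast_dvd_pow_sub_one hx hn0 heq hPodd hn hA hN ?_⟩
  · obtain ⟨c, hc⟩ := exists_geom_sum_pow_eq_prime_pow_mul_pow hx hn0 heq hPodd hn hA
      (t := t) (by have := hα s; omega)
    exact ⟨c, by rw [← hc, mul_geom_sum, ← pow_mul, mul_comm]⟩
  · by_contra h
    simp [h] at hδ

/-- **Lemma 2 of the paper.** Let `x, y, n, q` be integers with `|x| > 1`, `|y| > 1`,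
`n > 2`, `q ≥ 2`, `n` odd, satisfying `(x^n − 1)/(x − 1) = y^q`, and write
`n = p₁^{α₁} ⋯ p_k^{α_k}` with primes `p₁ < ⋯ < p_k` and positive exponents `αᵢ`.
Then for each index `s` there exists `δ_s ∈ {0, 1}` such that for every
`0 ≤ t ≤ α_s − 1`, setting `M_{s,t} = p_s^t · ∏_{j > s} p_j^{α_j}`, there is an
integer `y_{s,t}` with `(x^{p_s·M_{s,t}} − 1)/(x^{M_{s,t}} − 1) = p_s^{δ_s}·y_{s,t}^q`;
moreover, if `δ_s = 1` then `q ∣ α_s`. -/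
theorem nagell_ljunggren_tower_lemma
    (x y : ℤ) (n q k : ℕ) (p α : Fin k → ℕ)
    (hx : 1 < |x|) (hy : 1 < |y|) (hn : 2 < n) (hq : 2 ≤ q) (hodd : Odd n)
    (heq : x ^ n - 1 = (x - 1) * y ^ q)
    (hp : ∀ i, (p i).Prime) (hmono : StrictMono p) (hα : ∀ i, 0 < α i)
    (hfac : n = ∏ i, p i ^ α i) :
    ∀ s : Fin k, ∃ δ : ℕ, (δ = 0 ∨ δ = 1) ∧
      (∀ t, t ≤ α s - 1 → ∃ y' : ℤ,
        x ^ (p s * (p s ^ t * ∏ j ∈ Finset.univ.filter (fun j => s < j), p j ^ α j)) - 1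
          = (x ^ (p s ^ t * ∏ j ∈ Finset.univ.filter (fun j => s < j), p j ^ α j) - 1) *
              ((p s : ℤ) ^ δ * y' ^ q)) ∧
      (δ = 1 → q ∣ α s) :=
  nagell_ljunggren_tower_lemma_general x y n q k p α hx hodd heq hp hmono hα hfac
end

section
/- Let q be a prime, a an integer with 1 ≤ a ≤ q − 2, and r, s integers with 3 ≤ r < s. For a nonnegative integer n, let a_n = Σ (−1)^{i+j+k} · binom(a/q, i) · binom(1/q, j) · binom(−(a+1)/q, k), the sum taken over all nonnegative integers i, j, k with r·i + s·j + k = n. Then ord_q(a_n) = −n − ord_q(n!); in particular a_n ≠ 0. -/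
/-!
If `q ∤ m`, then `binom(m/q, l) = ∏_{i<l} (m - iq) / (q^l l!)` with numerator prime to `q`, so
`ord_q binom(m/q, l) = -l - ord_q(l!)`. Hence the term of `a_n` indexed by `(i, j, k)` has valuation
`-(i+j+k) - ord_q(i! j! k!)`. For `(0, 0, n)` this is `-n - ord_q(n!)`; every other index has
`i + j + k < n` (as `r, s ≥ 2`) and `i! j! k! ∣ n!`, so its term has strictly larger valuation, and
the ultrametric inequality shows that the term `(0, 0, n)` determines the valuation of the sum.
-/

/-- The generalized binomial coefficient `binom(α, l) = α(α−1)⋯(α−l+1)/l!`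
for a rational `α` and a natural number `l`. -/
noncomputable def qbinom (α : ℚ) (l : ℕ) : ℚ :=
  (∏ i ∈ Finset.range l, (α - i)) / (Nat.factorial l)

/-- The coefficient `a_n = Σ_{ri+sj+k=n} (−1)^{i+j+k} binom(a/q, i) binom(1/q, j)
binom(−(a+1)/q, k)` from the proof of Theorem 2. -/
noncomputable def rungeCoeffA (q a r s n : ℕ) : ℚ :=
  ∑ ijk ∈ (Finset.range (n + 1) ×ˢ Finset.range (n + 1) ×ˢ Finset.range (n + 1)).filter
      (fun ijk : ℕ × ℕ × ℕ => r * ijk.1 + s * ijk.2.1 + ijk.2.2 = n),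
    (-1 : ℚ) ^ (ijk.1 + ijk.2.1 + ijk.2.2) *
      qbinom ((a : ℚ) / q) ijk.1 * qbinom (1 / q) ijk.2.1 *
      qbinom (-((a : ℚ) + 1) / q) ijk.2.2

open Finset Nat

theorem qbinom_intCast_div_eq {p : ℕ} (hp : p ≠ 0) (m : ℤ) (l : ℕ) :
    qbinom (m / p) l = ((∏ i ∈ range l, (m - i * p) : ℤ) : ℚ) / (p ^ l * l ! : ℕ) := by
  have h : ∀ i ∈ range l, (m : ℚ) / p - i = ((m - i * p : ℤ) : ℚ) / p := fun i _ => by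
    push_cast
    field_simp
  rw [qbinom, prod_congr rfl h, prod_div_distrib, prod_const, card_range, div_div]
  push_cast
  rfl

theorem not_dvd_prod_sub_mul {p : ℕ} (hp : p.Prime) {m : ℤ} (hm : ¬(p : ℤ) ∣ m) (l : ℕ) :
    ¬(p : ℤ) ∣ ∏ i ∈ range l, (m - i * p) := by
  rw [(Nat.prime_iff_prime_int.1 hp).dvd_finsetProd_iff]
  rintro ⟨i, -, hi⟩
  exact hm (by simpa using hi.add (dvd_mul_left (p : ℤ) i))

def indexTriples (r s n : ℕ) : Finset (ℕ × ℕ × ℕ) :=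
  (range (n + 1) ×ˢ range (n + 1) ×ˢ range (n + 1)).filter
    fun ijk => r * ijk.1 + s * ijk.2.1 + ijk.2.2 = n

theorem zero_zero_mem_indexTriples (r s n : ℕ) : (0, 0, n) ∈ indexTriples r s n := by
  simp [indexTriples]

theorem add_add_lt_of_mem_indexTriples {r s n : ℕ} (hr : 2 ≤ r) (hs : 2 ≤ s)
    {ijk : ℕ × ℕ × ℕ} (h : ijk ∈ indexTriples r s n) (hne : ijk ≠ (0, 0, n)) :
    ijk.1 + ijk.2.1 + ijk.2.2 < n := by
  obtain ⟨i, j, k⟩ := ijk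
  have hsum : r * i + s * j + k = n := (mem_filter.1 h).2
  have hij : i ≠ 0 ∨ j ≠ 0 := by
    by_contra! hij
    obtain ⟨rfl, rfl⟩ := hij
    exact hne (by simpa using hsum)
  rcases hij with hi | hj
  · nlinarith [Nat.pos_of_ne_zero hi]
  · nlinarith [Nat.pos_of_ne_zero hj]

noncomputable def signedQbinomTerm (α β γ : ℚ) (ijk : ℕ × ℕ × ℕ) : ℚ :=
  (-1) ^ (ijk.1 + ijk.2.1 + ijk.2.2) * qbinom α ijk.1 * qbinom β ijk.2.1 * qbinom γ ijk.2.2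

section Valuation

variable {p : ℕ} [hp : Fact p.Prime] {m₁ m₂ m₃ : ℤ}

theorem qbinom_intCast_div_ne_zero {m : ℤ} (hm : ¬(p : ℤ) ∣ m) (l : ℕ) :
    qbinom (m / p) l ≠ 0 := by
  rw [qbinom_intCast_div_eq hp.out.ne_zero]
  exact div_ne_zero
    (Int.cast_ne_zero.2 fun h => not_dvd_prod_sub_mul hp.out hm l (h ▸ dvd_zero _))
    (Nat.cast_ne_zero.2 (mul_ne_zero (pow_ne_zero _ hp.out.ne_zero) l.factorial_ne_zero))

theorem padicValRat_qbinom_intCast_div {m : ℤ} (hm : ¬(p : ℤ) ∣ m) (l : ℕ) :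
    padicValRat p (qbinom (m / p) l) = -l - padicValNat p l ! := by
  have hnum := not_dvd_prod_sub_mul hp.out hm l
  have hnum0 : ((∏ i ∈ range l, (m - i * p) : ℤ) : ℚ) ≠ 0 :=
    Int.cast_ne_zero.2 fun h => hnum (h ▸ dvd_zero _)
  rw [qbinom_intCast_div_eq hp.out.ne_zero, padicValRat.div hnum0
      (Nat.cast_ne_zero.2 (mul_ne_zero (pow_ne_zero _ hp.out.ne_zero) l.factorial_ne_zero)),
    padicValRat.of_int, padicValInt.eq_zero_of_not_dvd hnum, padicValRat.of_nat,
    padicValNat.mul (pow_ne_zero _ hp.out.ne_zero) l.factorial_ne_zero, padicValNat.prime_pow]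
  push_cast
  ring

theorem padicNorm_sum_eq_of_lt {ι : Type*} [DecidableEq ι] {S : Finset ι} {f : ι → ℚ} {i₀ : ι}
    (hi₀ : i₀ ∈ S)
    (h : ∀ i ∈ S.erase i₀, padicNorm p (f i) < padicNorm p (f i₀)) :
    padicNorm p (∑ i ∈ S, f i) = padicNorm p (f i₀) := by
  rw [← add_sum_erase S f hi₀]
  obtain hS | hS := (S.erase i₀).eq_empty_or_nonempty
  · rw [hS, sum_empty, add_zero]
  have hlt := padicNorm.sum_lt hS h
  rw [padicNorm.add_eq_max_of_ne hlt.ne', max_eq_left hlt.le]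

theorem padicValRat_sum_eq_of_lt {ι : Type*} [DecidableEq ι] {S : Finset ι} {f : ι → ℚ} {i₀ : ι}
    (hi₀ : i₀ ∈ S)
    (hf : ∀ i ∈ S, f i ≠ 0)
    (h : ∀ i ∈ S.erase i₀, padicValRat p (f i₀) < padicValRat p (f i)) :
    ∑ i ∈ S, f i ≠ 0 ∧ padicValRat p (∑ i ∈ S, f i) = padicValRat p (f i₀) := by
  have hp1 : (1 : ℚ) < p := mod_cast hp.out.one_lt
  have hnorm : padicNorm p (∑ i ∈ S, f i) = padicNorm p (f i₀) := by
    refine padicNorm_sum_eq_of_lt hi₀ fun i hi => ?_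
    rw [padicNorm.eq_zpow_of_nonzero (hf i (mem_of_mem_erase hi)),
      padicNorm.eq_zpow_of_nonzero (hf i₀ hi₀)]
    exact zpow_lt_zpow_right₀ hp1 (neg_lt_neg (h i hi))
  have hsum : ∑ i ∈ S, f i ≠ 0 := fun h0 =>
    hf i₀ hi₀ (padicNorm.zero_of_padicNorm_eq_zero (by rw [← hnorm, h0, padicNorm.zero]))
  rw [padicNorm.eq_zpow_of_nonzero hsum, padicNorm.eq_zpow_of_nonzero (hf i₀ hi₀)] at hnorm
  exact ⟨hsum, neg_injective (zpow_right_injective₀ (by positivity) hp1.ne' hnorm)⟩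

theorem padicValNat_factorial_mul_factorial_mul_factorial_le {i j k n : ℕ} (h : i + j + k ≤ n) :
    padicValNat p (i ! * j ! * k !) ≤ padicValNat p n ! := by
  have hdvd : i ! * j ! * k ! ∣ n ! :=
    (mul_dvd_mul_right (factorial_mul_factorial_dvd_factorial_add i j) _).trans <|
      (factorial_mul_factorial_dvd_factorial_add (i + j) k).trans (factorial_dvd_factorial h)
  exact (padicValNat_dvd_iff_le n.factorial_ne_zero).1 (pow_padicValNat_dvd.trans hdvd)

theorem signedQbinomTerm_ne_zero (h₁ : ¬(p : ℤ) ∣ m₁) (h₂ : ¬(p : ℤ) ∣ m₂)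
    (h₃ : ¬(p : ℤ) ∣ m₃) (ijk : ℕ × ℕ × ℕ) :
    signedQbinomTerm (m₁ / p) (m₂ / p) (m₃ / p) ijk ≠ 0 :=
  mul_ne_zero (mul_ne_zero (mul_ne_zero (pow_ne_zero _ (by norm_num))
    (qbinom_intCast_div_ne_zero h₁ _)) (qbinom_intCast_div_ne_zero h₂ _))
    (qbinom_intCast_div_ne_zero h₃ _)

theorem padicValRat_signedQbinomTerm (h₁ : ¬(p : ℤ) ∣ m₁) (h₂ : ¬(p : ℤ) ∣ m₂)
    (h₃ : ¬(p : ℤ) ∣ m₃) (ijk : ℕ × ℕ × ℕ) :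
    padicValRat p (signedQbinomTerm (m₁ / p) (m₂ / p) (m₃ / p) ijk) =
      -(ijk.1 + ijk.2.1 + ijk.2.2 : ℕ) - padicValNat p (ijk.1 ! * ijk.2.1 ! * ijk.2.2 !) := by
  obtain ⟨i, j, k⟩ := ijk
  have hB₁ := qbinom_intCast_div_ne_zero (p := p) h₁ i
  have hB₂ := qbinom_intCast_div_ne_zero (p := p) h₂ j
  have hB₃ := qbinom_intCast_div_ne_zero (p := p) h₃ k
  have hsign : ((-1 : ℚ) ^ (i + j + k)) ≠ 0 := pow_ne_zero _ (by norm_num)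
  rw [signedQbinomTerm, padicValRat.mul (mul_ne_zero (mul_ne_zero hsign hB₁) hB₂) hB₃,
    padicValRat.mul (mul_ne_zero hsign hB₁) hB₂, padicValRat.mul hsign hB₁,
    padicValRat.pow, padicValRat.neg, padicValRat.one,
    padicValRat_qbinom_intCast_div h₁, padicValRat_qbinom_intCast_div h₂,
    padicValRat_qbinom_intCast_div h₃,
    padicValNat.mul (mul_ne_zero i.factorial_ne_zero j.factorial_ne_zero) k.factorial_ne_zero,
    padicValNat.mul i.factorial_ne_zero j.factorial_ne_zero]
  push_cast
  ring

theorem sum_indexTriples_signedQbinomTerm (h₁ : ¬(p : ℤ) ∣ m₁) (h₂ : ¬(p : ℤ) ∣ m₂)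
    (h₃ : ¬(p : ℤ) ∣ m₃) {r s : ℕ} (hr : 2 ≤ r) (hs : 2 ≤ s) (n : ℕ) :
    ∑ ijk ∈ indexTriples r s n, signedQbinomTerm (m₁ / p) (m₂ / p) (m₃ / p) ijk ≠ 0 ∧
      padicValRat p (∑ ijk ∈ indexTriples r s n, signedQbinomTerm (m₁ / p) (m₂ / p) (m₃ / p) ijk)
        = -n - padicValNat p n ! := by
  have hval := padicValRat_signedQbinomTerm (p := p) h₁ h₂ h₃
  have hmain : padicValRat p (signedQbinomTerm (m₁ / p) (m₂ / p) (m₃ / p) (0, 0, n)) =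
      -n - padicValNat p n ! := by
    simp [hval]
  rw [← hmain]
  refine padicValRat_sum_eq_of_lt (zero_zero_mem_indexTriples r s n)
    (fun ijk _ => signedQbinomTerm_ne_zero h₁ h₂ h₃ ijk) fun ijk hijk => ?_
  obtain ⟨hne, hmem⟩ := mem_erase.1 hijk
  have hlt := add_add_lt_of_mem_indexTriples hr hs hmem hne
  have hle := padicValNat_factorial_mul_factorial_mul_factorial_le (p := p) hlt.le
  rw [hmain, hval]
  omega

end Valuation

/-- **Lemma 3, part (i).** Let `q` be a prime, `a` an integer with `1 ≤ a ≤ q − 2`,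
and `r, s` integers with `3 ≤ r < s`.  Then `ord_q(a_n) = −n − ord_q(n!)`; in
particular `a_n ≠ 0`. -/
theorem ord_q_rungeCoeffA
    (q a r s n : ℕ) (hq : q.Prime) (ha1 : 1 ≤ a) (ha2 : a ≤ q - 2)
    (hr : 3 ≤ r) (hrs : r < s) :
    rungeCoeffA q a r s n ≠ 0 ∧
      padicValRat q (rungeCoeffA q a r s n) =
        -(n : ℤ) - (padicValNat q (Nat.factorial n) : ℤ) := by
  have : Fact q.Prime := ⟨hq⟩
  have not_dvd_of_lt : ∀ m : ℕ, 0 < m → m < q → ¬(q : ℤ) ∣ m := fun m h0 hmq =>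
    Int.natCast_dvd_natCast.not.2 (Nat.not_dvd_of_pos_of_lt h0 hmq)
  have hA : rungeCoeffA q a r s n = ∑ ijk ∈ indexTriples r s n,
      signedQbinomTerm ((a : ℤ) / q) ((1 : ℤ) / q) (-((a + 1 : ℕ) : ℤ) / q) ijk := by
    push_cast
    rfl
  rw [hA]
  exact sum_indexTriples_signedQbinomTerm (not_dvd_of_lt a (by omega) (by omega))
    (not_dvd_of_lt 1 one_pos hq.one_lt)
    (Int.dvd_neg.not.2 (not_dvd_of_lt (a + 1) (by omega) (by omega)))
    (by omega) (by omega) n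
end

section
/- Let q be a prime, a an integer with 1 ≤ a ≤ q − 2, and r, s integers with 3 ≤ r < s. For a nonnegative integer n, let a_n = Σ (−1)^{i+j+k} · binom(a/q, i) · binom(1/q, j) · binom(−(a+1)/q, k), the sum taken over all nonnegative integers i, j, k with r·i + s·j + k = n. Then q^{n + ⌊n/(q−1)⌋} · a_n is an integer. -/
/-!
For an integer `c`, `q^l · l! · binom(c/q, l) = ∏_{i<l} (c − q i)`. Away from `q` this product
is divisible by `l!`: modulo the prime-to-`q` part `m` of `l!`, `q` is invertible and the product
is `q^l` times a product of `l` consecutive integers. Hence `q^{l + v_q(l!)} binom(c/q, l)` is an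
integer, and Legendre's formula gives `v_q(l!) ≤ ⌊l/(q−1)⌋`. Each term of `a_n` is a product of
three such coefficients with `i + j + k ≤ n`, and `l ↦ l + ⌊l/(q−1)⌋` is superadditive.
-/

open Finset Nat

theorem Int.factorial_dvd_prod_range_sub (b : ℤ) (l : ℕ) :
    (l ! : ℤ) ∣ ∏ i ∈ Finset.range l, (b - i) := by
  rw [← descPochhammer_eval_eq_prod_range, Polynomial.eval_eq_smeval,
    Ring.descPochhammer_eq_factorial_smul_choose, nsmul_eq_mul]
  exact dvd_mul_right _ _

theorem Int.dvd_prod_range_sub_mul {m u : ℤ} (c : ℤ) {l : ℕ} (hm : m ∣ l !)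
    (hu : IsCoprime u m) : m ∣ ∏ i ∈ Finset.range l, (c - u * i) := by
  obtain ⟨v, t, hvt⟩ := hu
  have hmod : ∏ i ∈ Finset.range l, (c - u * i) ≡
      ∏ i ∈ Finset.range l, (u * (v * c - i)) [ZMOD m] :=
    Int.ModEq.prod fun i _ => Int.modEq_iff_dvd.mpr ⟨-(t * c), by linear_combination c * hvt⟩
  have hprod : m ∣ ∏ i ∈ Finset.range l, (u * (v * c - i)) := by
    rw [prod_mul_distrib]
    exact (hm.trans (Int.factorial_dvd_prod_range_sub _ l)).mul_left _
  simpa using dvd_sub hprod hmod.dvd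

theorem factorial_dvd_ordProj_mul_prod_range_sub_mul {q : ℕ} (hq : q.Prime) (c : ℤ) (l : ℕ) :
    (l ! : ℤ) ∣ q ^ (l !).factorization q * ∏ i ∈ range l, (c - q * i) := by
  have hcop : IsCoprime (q : ℤ) (ordCompl[q] l ! : ℕ) :=
    Nat.isCoprime_iff_coprime.mpr (coprime_ordCompl hq (factorial_ne_zero l))
  have hm : ((ordCompl[q] l ! : ℕ) : ℤ) ∣ l ! := Int.natCast_dvd_natCast.mpr (ordCompl_dvd _ q)
  conv_lhs => rw [← ordProj_mul_ordCompl_eq_self l ! q]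
  push_cast
  exact mul_dvd_mul_left _ (Int.dvd_prod_range_sub_mul c hm hcop)

theorem pow_mul_qbinom_intCast_div_mem_bot {q : ℕ} (hq : q.Prime) (c : ℤ) (l : ℕ) :
    (q : ℚ) ^ (l + l / (q - 1)) * qbinom (c / q) l ∈ (⊥ : Subring ℚ) := by
  obtain ⟨M, hM⟩ := factorial_dvd_ordProj_mul_prod_range_sub_mul hq c l
  have hq0 : (q : ℚ) ≠ 0 := by exact_mod_cast hq.ne_zero
  have hclear :
      (q : ℚ) ^ l * ∏ i ∈ range l, ((c : ℚ) / q - i) = ∏ i ∈ range l, (c - q * i : ℚ) := by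
    rw [pow_eq_prod_const, ← prod_mul_distrib]
    refine prod_congr rfl fun i _ => ?_
    field_simp
  have hM' : (q : ℚ) ^ (l !).factorization q * ∏ i ∈ range l, (c - q * i : ℚ) = l ! * M := by
    exact_mod_cast hM
  have hw := factorization_factorial_le_div_pred hq l
  rw [Subring.mem_bot]
  refine ⟨q ^ (l / (q - 1) - (l !).factorization q) * M, ?_⟩
  have hexp :
      l + l / (q - 1) = (l / (q - 1) - (l !).factorization q) + (l !).factorization q + l := by
    omega
  have hfac : (l ! : ℚ) ≠ 0 := by positivity
  rw [qbinom, hexp, pow_add, pow_add, mul_assoc, mul_assoc, mul_div_assoc', hclear,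
    mul_div_assoc', hM']
  push_cast
  field_simp

theorem add_add_div_le_of_add_le {i j k n d : ℕ} (h : i + j + k ≤ n) :
    i + i / d + (j + j / d) + (k + k / d) ≤ n + n / d := by
  have hij := Nat.div_add_div_le_add_div (x := i) (y := j) (z := d)
  have hijk := Nat.div_add_div_le_add_div (x := i + j) (y := k) (z := d)
  have hn := Nat.div_le_div_right (c := d) h
  omega

theorem pow_add_mul_mul_mem {R : Type*} [CommRing R] {S : Subring R} {q x y : R} {e f : ℕ}
    (hx : q ^ e * x ∈ S) (hy : q ^ f * y ∈ S) : q ^ (e + f) * (x * y) ∈ S := by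
  rw [pow_add, mul_mul_mul_comm]
  exact mul_mem hx hy

theorem pow_mul_mem_of_le {R : Type*} [CommRing R] {S : Subring R} {q x : R} {e f : ℕ}
    (hq : q ∈ S) (hef : e ≤ f) (hx : q ^ e * x ∈ S) : q ^ f * x ∈ S := by
  rw [← Nat.sub_add_cancel hef, pow_add, mul_assoc]
  exact mul_mem (pow_mem hq _) hx

theorem rungeCoeffA_int_general
    (q a r s n : ℕ) (hq : q.Prime)
    (hr : 3 ≤ r) (hrs : r < s) :
    ∃ m : ℤ, (q : ℚ) ^ (n + n / (q - 1)) * rungeCoeffA q a r s n = (m : ℚ) := by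
  suffices (q : ℚ) ^ (n + n / (q - 1)) * rungeCoeffA q a r s n ∈ (⊥ : Subring ℚ) by
    obtain ⟨m, hm⟩ := Subring.mem_bot.mp this
    exact ⟨m, hm.symm⟩
  rw [rungeCoeffA, mul_sum]
  refine sum_mem fun ⟨i, j, k⟩ hijk => ?_
  have hn : r * i + s * j + k = n := (mem_filter.mp hijk).2
  have hsum : i + j + k ≤ n := by nlinarith
  have hA := pow_mul_qbinom_intCast_div_mem_bot hq a i
  have hB := pow_mul_qbinom_intCast_div_mem_bot hq 1 j
  have hC := pow_mul_qbinom_intCast_div_mem_bot hq (-(a + 1)) k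
  push_cast at hA hB hC
  have hABC := pow_add_mul_mul_mem (pow_add_mul_mul_mem hA hB) hC
  have hsign : (-1 : ℚ) ^ (i + j + k) ∈ (⊥ : Subring ℚ) := pow_mem (neg_mem (one_mem _)) _
  convert mul_mem hsign
    (pow_mul_mem_of_le (natCast_mem _ q) (add_add_div_le_of_add_le hsum) hABC) using 1
  ring

/-- **Lemma 3, part (ii).** Let `q` be a prime, `a` an integer with `1 ≤ a ≤ q − 2`,
and `r, s` integers with `3 ≤ r < s`.  Then `q^{n + ⌊n/(q−1)⌋} · a_n` is an integer. -/
theorem rungeCoeffA_int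
    (q a r s n : ℕ) (hq : q.Prime) (ha1 : 1 ≤ a) (ha2 : a ≤ q - 2)
    (hr : 3 ≤ r) (hrs : r < s) :
    ∃ m : ℤ, (q : ℚ) ^ (n + n / (q - 1)) * rungeCoeffA q a r s n = (m : ℚ) :=
  rungeCoeffA_int_general q a r s n hq hr hrs
end

section
/- Let p be an odd prime, x an integer, and t a nonnegative integer. Then the p-adic valuation of the integer Σ_{i=0}^{p−1} x^{p^t · i} (which equals (x^{p^{t+1}} − 1)/(x^{p^t} − 1) when x^{p^t} ≠ 1) is equal to 1 if x ≡ 1 (mod p), and is equal to 0 otherwise. -/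
/-!
Put `y = x ^ p ^ t`, so the sum is `1 + y + ⋯ + y ^ (p - 1)`, and `y ≡ x [ZMOD p]` by Fermat.
If `y ≡ 1`, the sum is `≡ p [ZMOD p ^ 2]` (this needs `p` odd), so its valuation is `1`.
Otherwise `p` does not divide it: modulo `p`, the sum times `y - 1` is `y ^ p - 1 = y - 1 ≠ 0`.
-/

theorem padicValInt_eq_of_emultiplicity_eq {p : ℕ} (hp : p ≠ 1) {z : ℤ} {n : ℕ}
    (h : emultiplicity (p : ℤ) z = n) : padicValInt p z = n := by
  have hz : z ≠ 0 := by
    rintro rfl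
    simp at h
  rw [padicValInt.of_ne_one_ne_zero hp hz, multiplicity_eq_of_emultiplicity_eq_some h]

theorem Int.pow_prime_pow_modEq_self {p : ℕ} (hp : p.Prime) (x : ℤ) (t : ℕ) :
    x ^ p ^ t ≡ x [ZMOD p] := by
  have := Fact.mk hp
  rw [← ZMod.intCast_eq_intCast_iff, Int.cast_pow, ZMod.pow_card_pow]

theorem Int.modEq_one_of_prime_dvd_geom_sum {p : ℕ} (hp : p.Prime) {y : ℤ}
    (h : (p : ℤ) ∣ ∑ i ∈ Finset.range p, y ^ i) : y ≡ 1 [ZMOD p] := by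
  have := Fact.mk hp
  rw [← ZMod.intCast_zmod_eq_zero_iff_dvd] at h
  push_cast at h
  have hgeom := geom_sum_mul (y : ZMod p) p
  rw [h, zero_mul, ZMod.pow_card] at hgeom
  rw [← ZMod.intCast_eq_intCast_iff, Int.cast_one]
  exact sub_eq_zero.mp hgeom.symm

theorem Int.emultiplicity_geom_sum_eq_one {p : ℕ} (hp : p.Prime) (hodd : Odd p) {y : ℤ}
    (hy : y ≡ 1 [ZMOD p]) : emultiplicity (p : ℤ) (∑ i ∈ Finset.range p, y ^ i) = 1 := by
  have hdvd : (p : ℤ) ∣ y - 1 := hy.symm.dvd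
  have hndvd : ¬ (p : ℤ) ∣ y := fun h =>
    hp.not_dvd_one (by exact_mod_cast (dvd_sub_right h).mp hdvd)
  simpa using emultiplicity_geom_sum₂_eq_one (Nat.prime_iff_prime_int.mp hp) hodd hdvd hndvd

/-- Let `p` be an odd prime, `x` an integer, and `t` a nonnegative integer.  Then the
`p`-adic valuation of the integer `Σ_{i=0}^{p−1} x^{pᵗ·i}` (which equals
`(x^{p^{t+1}} − 1)/(x^{pᵗ} − 1)` when `x^{pᵗ} ≠ 1`) equals `1` if
`x ≡ 1 (mod p)`, and equals `0` otherwise. -/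
theorem padicValInt_geom_sum_pow
    (p : ℕ) (x : ℤ) (t : ℕ) (hp : p.Prime) (hodd : Odd p) :
    (x ≡ 1 [ZMOD (p : ℤ)] →
        padicValInt p (∑ i ∈ Finset.range p, x ^ (p ^ t * i)) = 1) ∧
      (¬ x ≡ 1 [ZMOD (p : ℤ)] →
        padicValInt p (∑ i ∈ Finset.range p, x ^ (p ^ t * i)) = 0) := by
  simp only [pow_mul]
  have hy : x ^ p ^ t ≡ 1 [ZMOD p] ↔ x ≡ 1 [ZMOD p] :=
    ⟨(Int.pow_prime_pow_modEq_self hp x t).symm.trans,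
      (Int.pow_prime_pow_modEq_self hp x t).trans⟩
  refine ⟨fun hx => ?_, fun hx => ?_⟩
  · exact padicValInt_eq_of_emultiplicity_eq hp.ne_one
      (by exact_mod_cast Int.emultiplicity_geom_sum_eq_one hp hodd (hy.mpr hx))
  · exact padicValInt.eq_zero_of_not_dvd fun h =>
      hx (hy.mp (Int.modEq_one_of_prime_dvd_geom_sum hp h))
end

section
/- Let q ≥ 1 and c be integers with 1 ≤ c ≤ 2q − 1, and let l be a nonnegative integer. Then |binom(−c/q, l)| ≤ l + 1. -/
lemma prod_range_add_two_eq_factorial (l : ℕ) :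
    ∏ i ∈ Finset.range l, ((i : ℚ) + 2) = (l + 1).factorial := by
  rw [← Finset.prod_range_add_one_eq_factorial, Finset.prod_range_succ']
  push_cast
  simp only [mul_one, add_assoc, one_add_one_eq_two]

lemma abs_qbinom_le_of_abs_le_two {α : ℚ} (hα : |α| ≤ 2) (l : ℕ) :
    |qbinom α l| ≤ l + 1 := by
  have hnum : |∏ i ∈ Finset.range l, (α - i)| ≤ (l + 1).factorial :=
    calc |∏ i ∈ Finset.range l, (α - i)|
        = ∏ i ∈ Finset.range l, |α - i| := Finset.abs_prod _ _
      _ ≤ ∏ i ∈ Finset.range l, ((i : ℚ) + 2) := by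
          refine Finset.prod_le_prod (fun _ _ => abs_nonneg _) fun i _ => ?_
          calc |α - i| ≤ |α| + |(i : ℚ)| := abs_sub _ _
            _ ≤ i + 2 := by rw [Nat.abs_cast]; linarith
      _ = (l + 1).factorial := prod_range_add_two_eq_factorial l
  have hfac : (0 : ℚ) < l.factorial := mod_cast l.factorial_pos
  rw [qbinom, abs_div, Nat.abs_cast, div_le_iff₀ hfac]
  simpa [Nat.factorial_succ] using hnum

theorem abs_qbinom_neg_le_general
    (q c l : ℕ) (hc2 : c ≤ 2 * q - 1) :
    |qbinom (-(c : ℚ) / q) l| ≤ (l : ℚ) + 1 := by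
  refine abs_qbinom_le_of_abs_le_two ?_ l
  have hc : (c : ℚ) ≤ 2 * q := mod_cast (show c ≤ 2 * q by omega)
  rw [neg_div, abs_neg, abs_of_nonneg (by positivity)]
  exact div_le_of_le_mul₀ (by positivity) (by norm_num) hc

/-- Let `q ≥ 1` and `c` be integers with `1 ≤ c ≤ 2q − 1`, and let `l` be a
nonnegative integer.  Then `|binom(−c/q, l)| ≤ l + 1`. -/
theorem abs_qbinom_neg_le
    (q c l : ℕ) (hq : 1 ≤ q) (hc1 : 1 ≤ c) (hc2 : c ≤ 2 * q - 1) :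
    |qbinom (-(c : ℚ) / q) l| ≤ (l : ℚ) + 1 :=
  abs_qbinom_neg_le_general q c l hc2
end
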